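/- The numbers D̃(n,k) satisfy the self-contained recurrence: D̃(n,0) = 0, D̃(n,n) = (1 − (−1)^n)/2, and for 0 < k < n (as an identity of integers), D̃(n,k) = (2k+1)·D̃(n−1,k) + (2n−2k+1)·D̃(n−1,k−1) − (−1)^k·C(n−1,k−1), where C denotes the binomial coefficient. -/

import Mathlib

open MeasureTheory Finset

/-- Number of descents of a finite sequence given as a list. -/
def descCount {α : Type*} [LT α] [DecidableRel ((· < ·) : α → α → Prop)] : List α → ℕ
  | a :: b :: rest => (if b < a then 1 else 0) + descCount (b :: rest)
  | _ => 0

/-- Type A Eulerian number: permutations of {1,…,n} with k descents. -/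
def eulerianA (n k : ℕ) : ℕ :=
  Fintype.card {σ : Equiv.Perm (Fin n) // descCount (List.ofFn fun i => σ i) = k}

/-- Eulerian polynomial of type A. -/
noncomputable def polyA (n : ℕ) (t : ℝ) : ℝ :=
  ∑ k ∈ Finset.range (n + 1), (eulerianA n k : ℝ) * t ^ k

/-- The underlying set {-n, …, -1, 0, 1, …, n}. -/
abbrev BSet (n : ℕ) : Type := {x : ℤ // x ∈ Finset.Icc (-(n : ℤ)) (n : ℤ)}

def negB {n : ℕ} (x : BSet n) : BSet n :=
  ⟨-x.1, by have := x.2; simp only [Finset.mem_Icc] at *; omega⟩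

def posB {n : ℕ} (i : Fin n) : BSet n :=
  ⟨((i : ℕ) : ℤ) + 1, by have := i.isLt; simp only [Finset.mem_Icc]; omega⟩

/-- A permutation of {-n,…,n} is a signed permutation if σ(-k) = -σ(k). -/
def IsSigned {n : ℕ} (σ : Equiv.Perm (BSet n)) : Prop :=
  ∀ x : BSet n, (σ (negB x)).1 = -((σ x).1)

noncomputable instance {n : ℕ} (σ : Equiv.Perm (BSet n)) : Decidable (IsSigned σ) :=
  inferInstanceAs (Decidable (∀ x : BSet n, (σ (negB x)).1 = -((σ x).1)))

/-- Number of descents of the sequence (0, σ(1), …, σ(n)). -/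
def descB {n : ℕ} (σ : Equiv.Perm (BSet n)) : ℕ :=
  descCount ((0 : ℤ) :: List.ofFn fun i : Fin n => (σ (posB i)).1)

/-- Number of negative terms among σ(1), …, σ(n). -/
def negCount {n : ℕ} (σ : Equiv.Perm (BSet n)) : ℕ :=
  (Finset.univ.filter fun i : Fin n => (σ (posB i)).1 < 0).card

/-- Type B Eulerian number. -/
noncomputable def eulerianB (n k : ℕ) : ℕ :=
  Fintype.card {σ : Equiv.Perm (BSet n) // IsSigned σ ∧ descB σ = k}

/-- Primary type D Eulerian number. -/
noncomputable def eulerianD (n k : ℕ) : ℕ :=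
  Fintype.card {σ : Equiv.Perm (BSet n) //
    (IsSigned σ ∧ Even (negCount σ)) ∧ descB σ = k}

/-- Complementary type D Eulerian number. -/
noncomputable def eulerianDt (n k : ℕ) : ℕ :=
  Fintype.card {σ : Equiv.Perm (BSet n) //
    (IsSigned σ ∧ ¬ Even (negCount σ)) ∧ descB σ = k}

noncomputable def polyB (n : ℕ) (t : ℝ) : ℝ :=
  ∑ k ∈ Finset.range (n + 1), (eulerianB n k : ℝ) * t ^ k

noncomputable def polyD (n : ℕ) (t : ℝ) : ℝ :=
  ∑ k ∈ Finset.range (n + 1), (eulerianD n k : ℝ) * t ^ k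

noncomputable def polyDt (n : ℕ) (t : ℝ) : ℝ :=
  ∑ k ∈ Finset.range (n + 1), (eulerianDt n k : ℝ) * t ^ k

/-!
A signed permutation is determined by its word `(σ(1), …, σ(n))`, and every word of length `n + 1`
arises exactly once by inserting `n + 1` or `-(n + 1)` into a word of length `n`. Inserting a new
maximum or minimum after the leading `0` raises the descent number `d` by `0` or `1`; a maximum
leaves it unchanged in `d + 1` of the `n + 1` slots, a minimum in `d` of them. Weighting each word by
`ε ^ (number of negative entries)` therefore gives numbers `W_ε(n, k)` with a two-term recurrence.
For `ε = -1` it collapses to Pascal's rule, so `W_{-1}(n, k) = (-1)^k C(n, k)`, while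
`W_1(n, k) - W_{-1}(n, k) = 2 D̃(n, k)`. Substituting `W_1 = 2 D̃ + W_{-1}` into the recurrence for
`W_1` gives the one for `D̃`, the binomial terms combining via `(k + 1) C(n, k + 1) = (n - k) C(n, k)`.
-/

theorem card_filter_eq_of_eq_or_eq_succ {ι : Type*} {s : Finset ι} {f : ι → ℕ} {d : ℕ}
    (h : ∀ i ∈ s, f i = d ∨ f i = d + 1) (k : ℕ) :
    #{i ∈ s | f i = k} =
      if k = d then #{i ∈ s | f i = d} else if k = d + 1 then #s - #{i ∈ s | f i = d} else 0 := by
  split_ifs with hd hd1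
  · rw [hd]
  · have hsplit := Finset.card_filter_add_card_filter_not (s := s) (fun i => f i = d)
    have hcongr : {i ∈ s | ¬ f i = d} = {i ∈ s | f i = k} :=
      Finset.filter_congr fun i hi => by rcases h i hi with e | e <;> omega
    rw [hcongr] at hsplit
    omega
  · rw [Finset.card_eq_zero, Finset.filter_eq_empty_iff]
    intro i hi
    rcases h i hi with e | e <;> omega

theorem List.insertIdx_inj {α : Type*} {l₁ l₂ : List α} {a₁ a₂ : α} {p₁ p₂ : ℕ}
    (hp₁ : p₁ ≤ l₁.length) (hp₂ : p₂ ≤ l₂.length) (ha₁ : a₁ ∉ l₂) (ha₂ : a₂ ∉ l₁)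
    (h : l₁.insertIdx p₁ a₁ = l₂.insertIdx p₂ a₂) : p₁ = p₂ ∧ a₁ = a₂ ∧ l₁ = l₂ := by
  have key : ∀ {l₁ l₂ : List α} {a₁ a₂ : α} {p₁ p₂ : ℕ}, p₁ ≤ l₁.length →
      a₁ ∉ l₂ → l₁.insertIdx p₁ a₁ = l₂.insertIdx p₂ a₂ → ¬ p₁ < p₂ := by
    intro l₁ l₂ a₁ a₂ p₁ p₂ hp₁ ha₁ h hlt
    have e := congrArg (·[p₁]?) h
    simp only [List.getElem?_insertIdx_self, if_pos hp₁, List.getElem?_insertIdx_of_lt hlt] at e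
    exact ha₁ (List.mem_of_getElem? e.symm)
  have hp : p₁ = p₂ := by
    have := key hp₁ ha₁ h
    have := key hp₂ ha₂ h.symm
    omega
  subst hp
  have ha : a₁ = a₂ := by
    simpa [List.getElem?_insertIdx_self, hp₁, hp₂] using congrArg (·[p₁]?) h
  subst ha
  exact ⟨rfl, rfl, List.insertIdx_injective p₁ a₁ h⟩

section Descents

variable {α : Type*} [LinearOrder α]

theorem descCount_cons_cons (a b : α) (l : List α) :
    descCount (a :: b :: l) = (if b < a then 1 else 0) + descCount (b :: l) := rfl

theorem descCount_cons_le_length (a : α) (l : List α) : descCount (a :: l) ≤ l.length := by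
  induction l generalizing a with
  | nil => simp [descCount]
  | cons b t ih =>
    rw [descCount_cons_cons]
    have := ih b
    simp only [List.length_cons]
    split <;> omega

theorem forall_lt_or_forall_gt_of_cons {c a v : α} {t : List α}
    (hv : (∀ x ∈ c :: a :: t, x < v) ∨ ∀ x ∈ c :: a :: t, v < x) :
    (∀ x ∈ a :: t, x < v) ∨ ∀ x ∈ a :: t, v < x := by
  rcases hv with h | h
  · exact .inl fun x hx => h x (List.mem_cons_of_mem _ hx)
  · exact .inr fun x hx => h x (List.mem_cons_of_mem _ hx)

theorem descCount_insertIdx_eq_or_eq_succ {c v : α} {l : List α}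
    (hv : (∀ x ∈ c :: l, x < v) ∨ ∀ x ∈ c :: l, v < x) (p : ℕ) :
    descCount (c :: l.insertIdx p v) = descCount (c :: l) ∨
      descCount (c :: l.insertIdx p v) = descCount (c :: l) + 1 := by
  induction l generalizing c p with
  | nil =>
    rcases p with _ | _
    · simp only [List.insertIdx_zero, descCount_cons_cons]
      split <;> simp [descCount]
    · simp
  | cons a t ih =>
    rcases p with _ | q
    · simp only [List.insertIdx_zero, descCount_cons_cons]
      rcases hv with h | h <;> have := h c (by simp) <;> have := h a (by simp) <;>
        split_ifs <;> first | omega | (exfalso; order)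
    · simp only [List.insertIdx_succ_cons, descCount_cons_cons]
      rcases ih (forall_lt_or_forall_gt_of_cons hv) q with h | h <;> omega

-- The slots keeping the descent number are those inside a descent, and the last slot when `v` is
-- a maximum.
theorem card_descCount_insertIdx_eq_self {c v : α} {l : List α}
    (hv : (∀ x ∈ c :: l, x < v) ∨ ∀ x ∈ c :: l, v < x) :
    #{p ∈ range (l.length + 1) | descCount (c :: l.insertIdx p v) = descCount (c :: l)} =
      descCount (c :: l) + if v < c then 0 else 1 := by
  induction l generalizing c with
  | nil =>
    rw [List.length_nil, range_one, Finset.filter_singleton]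
    split_ifs <;> simp_all [descCount_cons_cons, descCount]
  | cons a t ih =>
    rw [card_filter, List.length_cons, Finset.sum_range_succ', ← card_filter]
    simp only [List.insertIdx_succ_cons, List.insertIdx_zero, descCount_cons_cons, add_right_inj]
    rw [ih (forall_lt_or_forall_gt_of_cons hv)]
    rcases hv with h | h <;> have := h c (by simp) <;> have := h a (by simp) <;>
        split_ifs <;> first | omega | (exfalso; order)

theorem card_descCount_insertIdx {c v : α} {l : List α}
    (hv : (∀ x ∈ c :: l, x < v) ∨ ∀ x ∈ c :: l, v < x) (k : ℕ) :
    #{p ∈ range (l.length + 1) | descCount (c :: l.insertIdx p v) = k} =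
      let d := descCount (c :: l)
      let m := d + if v < c then 0 else 1
      if k = d then m else if k = d + 1 then l.length + 1 - m else 0 := by
  rw [card_filter_eq_of_eq_or_eq_succ (fun p _ => descCount_insertIdx_eq_or_eq_succ hv p),
    card_descCount_insertIdx_eq_self hv, Finset.card_range]

end Descents

def negs (l : List ℤ) : ℕ := l.countP (· < 0)

def signedWords : ℕ → Finset (List ℤ)
  | 0 => {[]}
  | n + 1 => (signedWords n ×ˢ range (n + 1) ×ˢ ({1, -1} : Finset ℤ)).image
      fun x => x.1.insertIdx x.2.1 (x.2.2 * (n + 1))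

theorem natAbs_sign_mul_succ {s : ℤ} (hs : s ∈ ({1, -1} : Finset ℤ)) (n : ℕ) :
    (s * (n + 1)).natAbs = n + 1 := by
  simp only [Finset.mem_insert, Finset.mem_singleton] at hs
  rcases hs with rfl | rfl <;> omega

theorem mem_signedWords {n : ℕ} {l : List ℤ} :
    l ∈ signedWords n ↔ (l.map Int.natAbs).Perm (List.range' 1 n) := by
  induction n generalizing l with
  | zero => simp [signedWords]
  | succ n ih =>
    have hrange : (List.range' 1 (n + 1)).Perm ((n + 1) :: List.range' 1 n) := by
      rw [List.range'_concat, one_mul, add_comm 1 n]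
      exact List.perm_append_singleton _ _
    simp only [signedWords, Finset.mem_image, Finset.mem_product, Finset.mem_range, Prod.exists]
    constructor
    · rintro ⟨l', p, s, ⟨hl', hp, hs⟩, rfl⟩
      have hlen : l'.length = n := by simpa using (ih.1 hl').length_eq
      rw [List.map_insertIdx, natAbs_sign_mul_succ hs]
      exact ((List.perm_insertIdx _ _ (by simpa [hlen] using hp)).trans
        ((ih.1 hl').cons _)).trans hrange.symm
    · intro hl
      obtain ⟨x, hxl, hx⟩ := List.mem_map.1 ((hl.trans hrange).symm.subset List.mem_cons_self)
      obtain ⟨i, hi, rfl⟩ := List.getElem_of_mem hxl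
      have hx0 : l[i] ≠ 0 := fun h => by simp [h] at hx
      have hl_eq : (l.eraseIdx i).insertIdx i l[i] = l := List.insertIdx_eraseIdx_getElem hi
      have hlen : l.length = n + 1 := by simpa using hl.length_eq
      refine ⟨l.eraseIdx i, i, l[i].sign, ⟨ih.2 ?_, by omega, ?_⟩, ?_⟩
      · rw [← hl_eq, List.map_insertIdx, hx] at hl
        have hi' : i ≤ ((l.eraseIdx i).map Int.natAbs).length := by
          simp only [List.length_map, List.length_eraseIdx, hi, if_true]
          omega
        exact ((List.perm_insertIdx _ _ hi').symm.trans (hl.trans hrange)).cons_inv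
      · rcases Int.sign_trichotomy l[i] with h | h | h <;> simp_all
      · have hn : ((n : ℤ) + 1) = (l[i].natAbs : ℤ) := by rw [hx]; push_cast; rfl
        rw [hn, Int.sign_mul_natAbs, hl_eq]

theorem length_of_mem_signedWords {n : ℕ} {l : List ℤ} (hl : l ∈ signedWords n) :
    l.length = n := by
  simpa using (mem_signedWords.1 hl).length_eq

theorem natAbs_le_of_mem_signedWords {n : ℕ} {l : List ℤ} (hl : l ∈ signedWords n) {x : ℤ}
    (hx : x ∈ l) : x.natAbs ≤ n := by
  have := List.mem_range'_1.1 ((mem_signedWords.1 hl).subset (List.mem_map_of_mem hx))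
  omega

theorem insertIdx_injOn_signedWords (n : ℕ) :
    Set.InjOn (fun x : List ℤ × ℕ × ℤ => x.1.insertIdx x.2.1 (x.2.2 * (n + 1)))
      ↑(signedWords n ×ˢ range (n + 1) ×ˢ ({1, -1} : Finset ℤ)) := by
  rintro ⟨l₁, p₁, s₁⟩ h₁ ⟨l₂, p₂, s₂⟩ h₂ h
  simp only [Finset.coe_product, Set.mem_prod, Finset.mem_coe, Finset.mem_range] at h₁ h₂
  simp only at h
  have hnotin : ∀ {l s}, l ∈ signedWords n → s ∈ ({1, -1} : Finset ℤ) → s * (n + 1) ∉ l :=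
    fun hl hs hmem => by
      have := natAbs_le_of_mem_signedWords hl hmem
      rw [natAbs_sign_mul_succ hs] at this
      omega
  obtain ⟨rfl, hs, rfl⟩ := List.insertIdx_inj
    (by rw [length_of_mem_signedWords h₁.1]; omega) (by rw [length_of_mem_signedWords h₂.1]; omega)
    (hnotin h₂.1 h₁.2.2) (hnotin h₁.1 h₂.2.2) h
  obtain rfl : s₁ = s₂ := mul_right_cancel₀ (by positivity) hs
  rfl

theorem negs_insertIdx {l : List ℤ} {p : ℕ} (hp : p ≤ l.length) (v : ℤ) :
    negs (l.insertIdx p v) = negs l + if v < 0 then 1 else 0 := by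
  simp [negs, (List.perm_insertIdx v l hp).countP_eq, List.countP_cons]

theorem descCount_zero_cons_le {n : ℕ} {l : List ℤ} (hl : l ∈ signedWords n) :
    descCount (0 :: l) ≤ n :=
  length_of_mem_signedWords hl ▸ descCount_cons_le_length 0 l

theorem card_descCount_insertIdx_signedWords {n : ℕ} {l : List ℤ} (hl : l ∈ signedWords n) (k : ℕ) :
    #{p ∈ range (n + 1) | descCount (0 :: l.insertIdx p ((n : ℤ) + 1)) = k} =
      (if k = descCount (0 :: l) then descCount (0 :: l) + 1
        else if k = descCount (0 :: l) + 1 then n - descCount (0 :: l) else 0) ∧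
    #{p ∈ range (n + 1) | descCount (0 :: l.insertIdx p (-((n : ℤ) + 1))) = k} =
      (if k = descCount (0 :: l) then descCount (0 :: l)
        else if k = descCount (0 :: l) + 1 then n + 1 - descCount (0 :: l) else 0) := by
  have hlen := length_of_mem_signedWords hl
  have hbound : ∀ x ∈ (0 : ℤ) :: l, x.natAbs ≤ n := by
    simpa using fun x hx => natAbs_le_of_mem_signedWords hl hx
  constructor
  · rw [← hlen, card_descCount_insertIdx (.inl fun x hx => by have := hbound x hx; omega)]
    simp only [show ¬ ((l.length : ℤ) + 1 < 0) by omega, if_false]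
    split_ifs <;> omega
  · rw [← hlen, card_descCount_insertIdx (.inr fun x hx => by have := hbound x hx; omega)]
    simp only [show -((l.length : ℤ) + 1) < 0 by omega, if_true, add_zero]

def signedWord {n : ℕ} (σ : Equiv.Perm (BSet n)) : List ℤ :=
  List.ofFn fun i : Fin n => (σ (posB i)).1

theorem BSet.eq_zero_or_posB_or_negB {n : ℕ} (x : BSet n) :
    x.1 = 0 ∨ ∃ i, x = posB i ∨ x = negB (posB i) := by
  obtain ⟨x, hx⟩ := x
  simp only [Finset.mem_Icc] at hx
  rcases eq_or_ne x 0 with h | h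
  · exact .inl h
  · refine .inr ⟨⟨x.natAbs - 1, by omega⟩, ?_⟩
    rcases lt_or_gt_of_ne h with h | h
    · exact .inr (Subtype.ext (by simp only [negB, posB]; omega))
    · exact .inl (Subtype.ext (by simp only [posB]; omega))

namespace IsSigned

variable {n : ℕ} {σ τ : Equiv.Perm (BSet n)}

theorem apply_val_eq_zero_iff (hσ : IsSigned σ) (x : BSet n) : (σ x).1 = 0 ↔ x.1 = 0 := by
  have key : ∀ y : BSet n, y.1 = 0 → (σ y).1 = 0 := fun y hy => by
    have := hσ y
    rw [show negB y = y from Subtype.ext (by simp [negB, hy])] at this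
    omega
  refine ⟨fun h => ?_, key x⟩
  have : σ x = σ ⟨0, by simp⟩ := Subtype.ext (by rw [h, key _ rfl])
  simpa using congrArg Subtype.val (σ.injective this)

theorem natAbs_eq_of_natAbs_apply_eq (hσ : IsSigned σ) {x y : BSet n}
    (h : (σ x).1.natAbs = (σ y).1.natAbs) : x.1.natAbs = y.1.natAbs := by
  rcases Int.natAbs_eq_natAbs_iff.1 h with h | h
  · rw [σ.injective (Subtype.ext h)]
  · rw [← hσ y] at h
    rw [σ.injective (Subtype.ext h)]
    simp [negB]

theorem ext (hσ : IsSigned σ) (hτ : IsSigned τ) (h : signedWord σ = signedWord τ) : σ = τ := by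
  have hpos : ∀ i, σ (posB i) = τ (posB i) := fun i =>
    Subtype.ext (congrFun (List.ofFn_injective h) i)
  ext1 x
  rcases x.eq_zero_or_posB_or_negB with hx | ⟨i, rfl | rfl⟩
  · exact Subtype.ext (by rw [(hσ.apply_val_eq_zero_iff x).2 hx, (hτ.apply_val_eq_zero_iff x).2 hx])
  · exact hpos i
  · exact Subtype.ext (by rw [hσ, hτ, hpos])

theorem signedWord_mem_signedWords (hσ : IsSigned σ) : signedWord σ ∈ signedWords n := by
  rw [mem_signedWords]
  refine (List.Nodup.subperm ?_ fun m hm => ?_).perm_of_length_le (by simp [signedWord])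
  · rw [signedWord, List.map_ofFn, List.nodup_ofFn]
    intro i j hij
    have := hσ.natAbs_eq_of_natAbs_apply_eq hij
    simp only [posB] at this
    omega
  · obtain ⟨_, hx, rfl⟩ := List.mem_map.1 hm
    obtain ⟨i, rfl⟩ := List.mem_ofFn.1 hx
    have hne := (hσ.apply_val_eq_zero_iff (posB i)).not.2 (by simp only [posB]; omega)
    have hbound := Finset.mem_Icc.1 (σ (posB i)).2
    rw [List.mem_range'_1]
    omega

end IsSigned

theorem exists_isSigned_signedWord_eq {n : ℕ} {l : List ℤ} (hl : l ∈ signedWords n) :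
    ∃ σ : Equiv.Perm (BSet n), IsSigned σ ∧ signedWord σ = l := by
  have hperm := mem_signedWords.1 hl
  have hlen : l.length = n := by simpa using hperm.length_eq
  have hbound : ∀ i (hi : i < l.length), 0 < l[i].natAbs ∧ l[i].natAbs ≤ n := fun i hi => by
    have := List.mem_range'_1.1 (hperm.subset (List.mem_map_of_mem (List.getElem_mem hi)))
    omega
  have hinj : ∀ i j (hi : i < l.length) (hj : j < l.length),
      l[i].natAbs = l[j].natAbs → i = j := fun i j hi hj h =>
    (List.Nodup.getElem_inj_iff (hperm.nodup_iff.2 (List.nodup_range' ..))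
      (hi := by simpa using hi) (hj := by simpa using hj)).1 (by simpa using h)
  have hidx : ∀ x : BSet n, x.1 ≠ 0 → x.1.natAbs - 1 < l.length := fun x hx => by
    have := Finset.mem_Icc.1 x.2
    omega
  -- `σ x = sign x * l[|x| - 1]`; at `x = 0` the junk lookup is killed by `sign 0 = 0`.
  let a : BSet n → ℤ := fun x => l.getD (x.1.natAbs - 1) 0
  have ha : ∀ x : BSet n, (hx : x.1 ≠ 0) → a x = l[x.1.natAbs - 1]'(hidx x hx) := fun x hx => by
    simp [a, List.getElem?_eq_getElem (hidx x hx)]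
  let f : BSet n → BSet n := fun x => ⟨x.1.sign * a x, by
    rcases eq_or_ne x.1 0 with hx | hx
    · simp [hx]
    · have : (x.1.sign * a x).natAbs ≤ n := by
        rw [Int.natAbs_mul, Int.natAbs_sign_of_ne_zero hx, one_mul, ha x hx]
        exact (hbound _ _).2
      rw [Finset.mem_Icc]
      omega⟩
  have hf : Function.Injective f := by
    intro x y hxy
    have hv : x.1.sign * a x = y.1.sign * a y := congrArg Subtype.val hxy
    have ha0 : ∀ z : BSet n, z.1 ≠ 0 → a z ≠ 0 := fun z hz => by
      rw [ha z hz]; exact Int.natAbs_pos.1 (hbound _ _).1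
    rcases eq_or_ne x.1 0 with hx | hx <;> rcases eq_or_ne y.1 0 with hy | hy
    · exact Subtype.ext (hx.trans hy.symm)
    · simp [hx, hy, ha0 y hy] at hv
    · simp [hx, hy, ha0 x hx] at hv
    · have habs : x.1.natAbs = y.1.natAbs := by
        have := congrArg Int.natAbs hv
        simp only [Int.natAbs_mul, Int.natAbs_sign_of_ne_zero hx, Int.natAbs_sign_of_ne_zero hy,
          one_mul, ha x hx, ha y hy] at this
        have := hinj _ _ _ _ this
        omega
      have haxy : a x = a y := by simp only [a, habs]
      rw [haxy] at hv
      apply Subtype.ext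
      rw [← Int.sign_mul_natAbs x.1, ← Int.sign_mul_natAbs y.1, habs,
        mul_right_cancel₀ (ha0 y hy) hv]
  refine ⟨Equiv.ofBijective f (Finite.injective_iff_bijective.1 hf), fun x => ?_, ?_⟩
  · simp [f, a, negB, Int.sign_neg]
  · refine List.ext_getElem (by simp [signedWord, hlen]) fun i h₁ h₂ => ?_
    simp [signedWord, f, posB, a, show ((i : ℤ) + 1).natAbs - 1 = i by omega, h₂]

theorem negCount_eq_negs_signedWord {n : ℕ} (σ : Equiv.Perm (BSet n)) :
    negCount σ = negs (signedWord σ) := by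
  simp [negCount, negs, signedWord, List.ofFn_eq_map, Finset.card_def, Fin.univ_def,
    List.countP_eq_length_filter, List.filter_map, Function.comp_def]

theorem eulerianDt_eq_card_signedWords (n k : ℕ) :
    eulerianDt n k = #{l ∈ signedWords n | descCount (0 :: l) = k ∧ Odd (negs l)} := by
  rw [eulerianDt, Fintype.card_subtype]
  refine Finset.card_bij (fun σ _ => signedWord σ) ?_ ?_ ?_
  · simp only [Finset.mem_filter, Finset.mem_univ, true_and, and_imp]
    intro σ hσ hodd hk
    rw [negCount_eq_negs_signedWord, Nat.not_even_iff_odd] at hodd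
    exact ⟨hσ.signedWord_mem_signedWords, hk, hodd⟩
  · simp only [Finset.mem_filter, Finset.mem_univ, true_and]
    exact fun σ hσ τ hτ => hσ.1.1.ext hτ.1.1
  · simp only [Finset.mem_filter, Finset.mem_univ, true_and, exists_prop, and_imp]
    intro l hl hk hodd
    obtain ⟨σ, hσ, rfl⟩ := exists_isSigned_signedWord_eq hl
    rw [← negCount_eq_negs_signedWord, ← Nat.not_even_iff_odd] at hodd
    exact ⟨σ, ⟨⟨hσ, hodd⟩, hk⟩, rfl⟩

section Weighted

variable {R : Type*} [CommRing R]

-- `ε = 1` gives the type B Eulerian numbers; `ε = -1` counts with the sign `(-1) ^ (#negatives)`.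
def weightedEulerian (ε : R) (n k : ℕ) : R :=
  ∑ l ∈ signedWords n with descCount (0 :: l) = k, ε ^ negs l

theorem weightedEulerian_succ (ε : R) (n k : ℕ) :
    weightedEulerian ε (n + 1) k = ∑ l ∈ signedWords n, ε ^ negs l *
      (#{p ∈ range (n + 1) | descCount (0 :: l.insertIdx p ((n : ℤ) + 1)) = k} +
        ε * #{p ∈ range (n + 1) | descCount (0 :: l.insertIdx p (-((n : ℤ) + 1))) = k}) := by
  rw [weightedEulerian, signedWords, Finset.filter_image,
    Finset.sum_image ((insertIdx_injOn_signedWords n).mono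
      (Finset.coe_subset.2 (Finset.filter_subset _ _))),
    Finset.sum_filter, Finset.sum_product]
  refine Finset.sum_congr rfl fun l hl => ?_
  rw [Finset.sum_product, Finset.natCast_card_filter, Finset.natCast_card_filter, Finset.mul_sum,
    ← Finset.sum_add_distrib, Finset.mul_sum]
  refine Finset.sum_congr rfl fun p hp => ?_
  have hp' : p ≤ l.length := by
    rw [length_of_mem_signedWords hl]; exact Nat.lt_succ_iff.1 (Finset.mem_range.1 hp)
  rw [Finset.sum_pair (by norm_num), negs_insertIdx hp', negs_insertIdx hp']
  simp only [one_mul, neg_mul]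
  split_ifs <;> first | omega | ring

theorem weightedEulerian_eq_sum_ite (ε : R) (n k : ℕ) :
    weightedEulerian ε n k =
      ∑ l ∈ signedWords n, if descCount (0 :: l) = k then ε ^ negs l else 0 :=
  Finset.sum_filter _ _

theorem weightedEulerian_succ_zero (ε : R) (n : ℕ) :
    weightedEulerian ε (n + 1) 0 = weightedEulerian ε n 0 := by
  rw [weightedEulerian_succ, weightedEulerian_eq_sum_ite]
  refine Finset.sum_congr rfl fun l hl => ?_
  rw [(card_descCount_insertIdx_signedWords hl 0).1, (card_descCount_insertIdx_signedWords hl 0).2]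
  generalize descCount (0 :: l) = d
  split_ifs <;> subst_vars <;> simp_all

theorem weightedEulerian_succ_succ (ε : R) (n j : ℕ) :
    weightedEulerian ε (n + 1) (j + 1) =
      (j + 2 + ε * (j + 1)) * weightedEulerian ε n (j + 1) +
        (n - j + ε * (n + 1 - j)) * weightedEulerian ε n j := by
  rw [weightedEulerian_succ, weightedEulerian_eq_sum_ite, weightedEulerian_eq_sum_ite,
    Finset.mul_sum, Finset.mul_sum, ← Finset.sum_add_distrib]
  refine Finset.sum_congr rfl fun l hl => ?_
  have hd := descCount_zero_cons_le hl
  rw [(card_descCount_insertIdx_signedWords hl _).1, (card_descCount_insertIdx_signedWords hl _).2]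
  generalize descCount (0 :: l) = d at hd
  rcases eq_or_ne d (j + 1) with rfl | h₁
  · simp only [if_true, Nat.cast_add, Nat.cast_one, Nat.add_eq_left, one_ne_zero, if_false,
      mul_zero, add_zero]
    ring
  rcases eq_or_ne d j with rfl | h₂
  · simp only [Nat.add_eq_left, one_ne_zero, if_true, if_false, Nat.cast_sub hd,
      Nat.cast_sub (hd.trans (Nat.le_add_right n 1)), Nat.cast_add, Nat.cast_one, Nat.left_eq_add,
      mul_zero, zero_add]
    ring
  · simp [h₁, h₂, h₁.symm, h₂.symm]

theorem weightedEulerian_eq_zero_of_lt (ε : R) {n k : ℕ} (h : n < k) : weightedEulerian ε n k = 0 :=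
  Finset.sum_eq_zero fun l hl => by
    have := descCount_zero_cons_le (Finset.mem_filter.1 hl).1
    have := (Finset.mem_filter.1 hl).2
    omega

theorem weightedEulerian_zero_right (ε : R) (n : ℕ) : weightedEulerian ε n 0 = 1 := by
  induction n with
  | zero => simp [weightedEulerian, signedWords, Finset.filter_singleton, descCount, negs]
  | succ n ih => rw [weightedEulerian_succ_zero, ih]

theorem weightedEulerian_neg_one (n k : ℕ) :
    weightedEulerian (-1 : R) n k = (-1) ^ k * n.choose k := by
  induction n generalizing k with
  | zero =>
    rcases k with _ | k
    · simp [weightedEulerian_zero_right]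
    · simp [weightedEulerian_eq_zero_of_lt _ k.succ_pos]
  | succ n ih =>
    rcases k with _ | k
    · simp [weightedEulerian_zero_right]
    · rw [weightedEulerian_succ_succ, ih, ih, Nat.choose_succ_succ]
      push_cast
      ring

theorem weightedEulerian_one_self (n : ℕ) : weightedEulerian (1 : R) n n = 1 := by
  induction n with
  | zero => exact weightedEulerian_zero_right 1 0
  | succ n ih =>
    rw [weightedEulerian_succ_succ, ih, weightedEulerian_eq_zero_of_lt _ n.lt_succ_self]
    ring

end Weighted

theorem two_mul_eulerianDt (n k : ℕ) :
    2 * (eulerianDt n k : ℤ) = weightedEulerian 1 n k - weightedEulerian (-1) n k := by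
  rw [eulerianDt_eq_card_signedWords, weightedEulerian, weightedEulerian, ← Finset.sum_sub_distrib,
    ← Finset.filter_filter, Finset.natCast_card_filter, Finset.mul_sum]
  refine Finset.sum_congr rfl fun l _ => ?_
  rcases Nat.even_or_odd (negs l) with h | h
  · simp [h.neg_one_pow, Nat.not_odd_iff_even.2 h]
  · simp [h.neg_one_pow, h]

theorem cast_choose_succ_right_mul (m j : ℕ) :
    (m.choose (j + 1) : ℤ) * (j + 1) = m.choose j * (m - j) := by
  rcases le_or_gt j m with h | h
  · have := congrArg (Nat.cast (R := ℤ)) (Nat.choose_succ_right_eq m j)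
    push_cast [Nat.cast_sub h] at this
    exact this
  · simp [Nat.choose_eq_zero_of_lt h, Nat.choose_eq_zero_of_lt (h.trans j.lt_succ_self)]

theorem eulerianDt_succ_succ (m j : ℕ) :
    (eulerianDt (m + 1) (j + 1) : ℤ) = (2 * (j + 1 : ℤ) + 1) * eulerianDt m (j + 1)
      + (2 * (m + 1 : ℤ) - 2 * (j + 1 : ℤ) + 1) * eulerianDt m j - (-1) ^ (j + 1) * m.choose j := by
  have h₁ := two_mul_eulerianDt (m + 1) (j + 1)
  have h₂ := two_mul_eulerianDt m (j + 1)
  have h₃ := two_mul_eulerianDt m j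
  rw [weightedEulerian_succ_succ, weightedEulerian_neg_one, Nat.choose_succ_succ] at h₁
  rw [weightedEulerian_neg_one] at h₂ h₃
  have hc := cast_choose_succ_right_mul m j
  push_cast [Nat.succ_eq_add_one] at h₁
  refine mul_left_cancel₀ (two_ne_zero' ℤ) ?_
  linear_combination h₁ - (2 * (j + 1 : ℤ) + 1) * h₂ - (2 * (m + 1 : ℤ) - 2 * (j + 1 : ℤ) + 1) * h₃
    + 2 * (-1) ^ (j + 1) * hc

theorem stmt11 :
    (∀ n : ℕ, eulerianDt n 0 = 0) ∧
    (∀ n : ℕ, 2 * (eulerianDt n n : ℤ) = 1 - (-1) ^ n) ∧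
    (∀ n k : ℕ, 0 < k → k < n →
      (eulerianDt n k : ℤ) = (2 * (k : ℤ) + 1) * eulerianDt (n - 1) k
        + (2 * (n : ℤ) - 2 * (k : ℤ) + 1) * eulerianDt (n - 1) (k - 1)
        - (-1) ^ k * ((n - 1).choose (k - 1) : ℤ)) := by
  refine ⟨fun n => ?_, fun n => ?_, fun n k hk hkn => ?_⟩
  · have h := two_mul_eulerianDt n 0
    rw [weightedEulerian_zero_right, weightedEulerian_zero_right, sub_self] at h
    omega
  · rw [two_mul_eulerianDt, weightedEulerian_one_self, weightedEulerian_neg_one, Nat.choose_self,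
      Nat.cast_one, mul_one]
  · obtain ⟨m, rfl⟩ : ∃ m, n = m + 1 := ⟨n - 1, by omega⟩
    obtain ⟨j, rfl⟩ : ∃ j, k = j + 1 := ⟨k - 1, by omega⟩
    simpa using eulerianDt_succ_succ m j
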